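/- arXiv:math/9801019 — 6 statements merged into one kernel-verified Lean document; each statement's English description precedes it below -/
import Mathlib

section
/- Let x, y, z ∈ PSL(2,ℂ) be elements of infinite order such that x commutes with y and y commutes with z. Then x commutes with z. -/
/-!
Lift `x`, `y`, `z` to `X`, `Y`, `Z ∈ SL(2, ℂ)`. Commuting in `PSL(2, ℂ)` means `Y X = ± X Y`; the
minus sign is impossible, since conjugation by `X` would negate `Y`, forcing `tr Y = 0`, and then
Cayley–Hamilton gives `Y² = -1`, so `y` would be an involution. Hence `X` and `Z` both commute with
`Y`, which is not scalar because `y ≠ 1`. The centralizer of a non-scalar `2 × 2` matrix `N` is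
`{α + β N}`, a commutative algebra, so `X` and `Z` commute.
-/

/-- `SL(2,ℂ)`: 2×2 complex matrices of determinant 1. -/
abbrev SL2C := Matrix.SpecialLinearGroup (Fin 2) ℂ

/-- `PSL(2,ℂ)`: the quotient of `SL(2,ℂ)` by its center `{I, -I}`. -/
abbrev PSL2C := SL2C ⧸ Subgroup.center SL2C

open Matrix Matrix.SpecialLinearGroup
open scoped MatrixGroups

namespace Matrix

section FinTwo

variable {K : Type*} [Field K]

theorem exists_eq_scalar_add_smul_of_commute_fin_two {M N : Matrix (Fin 2) (Fin 2) K}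
    (hN : ∀ a, N ≠ scalar (Fin 2) a) (h : Commute M N) :
    ∃ α β : K, M = scalar (Fin 2) α + β • N := by
  obtain ⟨p, q, r, s, rfl⟩ : ∃ p q r s, M = !![p, q; r, s] := ⟨_, _, _, _, eta_fin_two M⟩
  obtain ⟨a, b, c, d, rfl⟩ : ∃ a b c d, N = !![a, b; c, d] := ⟨_, _, _, _, eta_fin_two N⟩
  obtain ⟨⟨E1, E2⟩, E3, -⟩ := by
    simpa only [mul_fin_two, EmbeddingLike.apply_eq_iff_eq, vecCons_inj, and_true] using h.eq
  suffices ∃ α β : K, p = α + β * a ∧ q = β * b ∧ r = β * c ∧ s = α + β * d by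
    obtain ⟨α, β, h⟩ := this
    refine ⟨α, β, ?_⟩
    ext i j
    fin_cases i <;> fin_cases j <;> simp [h]
  by_cases hb : b = 0
  · by_cases hc : c = 0
    · have had : a - d ≠ 0 := by
        refine sub_ne_zero.mpr fun had ↦ hN a ?_
        ext i j
        fin_cases i <;> fin_cases j <;> simp [hb, hc, had]
      subst hb hc
      refine ⟨p - (p - s) / (a - d) * a, (p - s) / (a - d), by ring, ?_, ?_, by field_simp; ring⟩
      · rw [mul_zero]
        exact (mul_eq_zero.mp (by linear_combination -E2 : q * (a - d) = 0)).resolve_right had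
      · rw [mul_zero]
        exact (mul_eq_zero.mp (by linear_combination E3 : r * (a - d) = 0)).resolve_right had
    · refine ⟨p - r / c * a, r / c, by ring, ?_, by field_simp, ?_⟩
      · field_simp; linear_combination E1
      · field_simp; linear_combination E3
  · refine ⟨p - q / b * a, q / b, by ring, by field_simp, ?_, ?_⟩
    · field_simp; linear_combination -E1
    · field_simp; linear_combination -E2

theorem commute_trans_of_forall_ne_scalar_fin_two {M N P : Matrix (Fin 2) (Fin 2) K}
    (hN : ∀ a, N ≠ scalar (Fin 2) a) (hMN : Commute M N) (hNP : Commute N P) : Commute M P := by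
  obtain ⟨α, β, rfl⟩ := exists_eq_scalar_add_smul_of_commute_fin_two hN hMN
  obtain ⟨γ, δ, rfl⟩ := exists_eq_scalar_add_smul_of_commute_fin_two hN hNP.symm
  exact .add_left (scalar_commute _ (.all _) _)
    (.add_right (scalar_commute _ (.all _) _).symm (((Commute.refl N).smul_left β).smul_right δ))

end FinTwo

variable {R : Type*} [CommRing R]

theorem trace_eq_zero_of_mul_eq_neg_mul {n : Type*} [Fintype n] [DecidableEq n] [IsDomain R]
    [NeZero (2 : R)] {M N : Matrix n n R} (hM : IsUnit M.det) (h : N * M = -(M * N)) :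
    N.trace = 0 := by
  have htr : N.trace = -N.trace := calc
    N.trace = (M⁻¹ * (M * N)).trace := by rw [← mul_assoc, nonsing_inv_mul _ hM, one_mul]
    _ = (M * N * M⁻¹).trace := trace_mul_comm _ _
    _ = -(N * M * M⁻¹).trace := by rw [h, neg_mul, trace_neg, neg_neg]
    _ = -N.trace := by rw [mul_assoc, mul_nonsing_inv _ hM, mul_one]
  exact (mul_eq_zero.mp (by linear_combination htr : (2 : R) * N.trace = 0)).resolve_left
    two_ne_zero

theorem mul_self_eq_neg_one_of_trace_eq_zero [Nontrivial R] {N : Matrix (Fin 2) (Fin 2) R}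
    (hdet : N.det = 1) (htr : N.trace = 0) : N * N = -1 := by
  have hCH := aeval_self_charpoly N
  simp only [charpoly_fin_two, htr, hdet, map_add, map_pow, Polynomial.aeval_X, map_zero,
    map_one, zero_mul, sub_zero] at hCH
  rw [← sq]
  exact eq_neg_of_add_eq_zero_left hCH

theorem SpecialLinearGroup.mem_center_of_coe_eq_scalar {n : Type*} [Fintype n] [DecidableEq n]
    {A : SpecialLinearGroup n R} {r : R} (h : (A : Matrix n n R) = scalar n r) :
    A ∈ Subgroup.center (SpecialLinearGroup n R) :=
  mem_center_iff.mpr ⟨r, by simpa [h] using A.det_coe, h.symm⟩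

end Matrix

section ProjectiveSpecialLinearGroup

variable {R : Type*} [CommRing R]

theorem isOfFinOrder_mk_of_trace_eq_zero [Nontrivial R] {Y : SL(2, R)}
    (h : (Y : Matrix (Fin 2) (Fin 2) R).trace = 0) :
    IsOfFinOrder (Y : SL(2, R) ⧸ Subgroup.center SL(2, R)) := by
  refine isOfFinOrder_iff_pow_eq_one.mpr ⟨2, two_pos, ?_⟩
  rw [← QuotientGroup.mk_pow, QuotientGroup.eq_one_iff]
  refine mem_center_of_coe_eq_scalar (r := -1) ?_
  rw [coe_pow, sq, mul_self_eq_neg_one_of_trace_eq_zero Y.det_coe h, map_neg, map_one]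

theorem commute_of_commute_mk [IsDomain R] [NeZero (2 : R)] {X Y : SL(2, R)}
    (hY : ¬IsOfFinOrder (Y : SL(2, R) ⧸ Subgroup.center SL(2, R)))
    (h : Commute (X : SL(2, R) ⧸ Subgroup.center SL(2, R)) Y) : Commute X Y := by
  have hcomm : (X * Y)⁻¹ * (Y * X) ∈ Subgroup.center SL(2, R) := QuotientGroup.eq.mp h.eq
  obtain ⟨ω, hω, hωcomm⟩ := mem_center_iff.mp hcomm
  have hYX : (Y : Matrix (Fin 2) (Fin 2) R) * X = X * Y * scalar (Fin 2) ω := calc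
    (Y : Matrix (Fin 2) (Fin 2) R) * X = ↑(X * Y * ((X * Y)⁻¹ * (Y * X))) := by
      rw [mul_inv_cancel_left, coe_mul]
    _ = X * Y * scalar (Fin 2) ω := by rw [coe_mul, ← hωcomm, coe_mul]
  rcases mul_self_eq_one_iff.mp (by simpa [sq] using hω) with rfl | rfl
  · exact Subtype.ext (by simpa using hYX.symm)
  · refine absurd (isOfFinOrder_mk_of_trace_eq_zero ?_) hY
    refine trace_eq_zero_of_mul_eq_neg_mul (M := X) (by simp) ?_
    rw [hYX, map_neg, map_one, mul_neg, mul_one]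

end ProjectiveSpecialLinearGroup

theorem commutation_transitive_general (x y z : PSL2C)
    (hy : ¬ IsOfFinOrder y)
    (hxy : Commute x y) (hyz : Commute y z) :
    Commute x z := by
  obtain ⟨X, rfl⟩ := QuotientGroup.mk_surjective x
  obtain ⟨Y, rfl⟩ := QuotientGroup.mk_surjective y
  obtain ⟨Z, rfl⟩ := QuotientGroup.mk_surjective z
  have hY : ∀ a, (Y : Matrix (Fin 2) (Fin 2) ℂ) ≠ scalar (Fin 2) a := fun a hYa ↦
    hy <| by rw [(QuotientGroup.eq_one_iff Y).mpr (mem_center_of_coe_eq_scalar hYa)]; exact .one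
  have hXZ : Commute X Z := Subtype.ext <| commute_trans_of_forall_ne_scalar_fin_two hY
    ((commute_of_commute_mk hy hxy).map coeMonoidHom)
    ((commute_of_commute_mk hy hyz.symm).symm.map coeMonoidHom)
  exact hXZ.map (QuotientGroup.mk' _)

/-- Commutation Transitive, part (i): if `x`, `y`, `z` are elements of `PSL(2,ℂ)` of
infinite order such that `x` commutes with `y` and `y` commutes with `z`, then `x`
commutes with `z`. -/
theorem commutation_transitive (x y z : PSL2C)
    (hx : ¬ IsOfFinOrder x) (hy : ¬ IsOfFinOrder y) (hz : ¬ IsOfFinOrder z)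
    (hxy : Commute x y) (hyz : Commute y z) :
    Commute x z :=
  commutation_transitive_general x y z hy hxy hyz
end

section
/- Let x, y ∈ PSL(2,ℂ) be elements of infinite order such that y⁻¹ x y commutes with x, and suppose that the subgroup of PSL(2,ℂ) generated by {x, y} is discrete. Then y commutes with x. -/
/-- The topology on `SL(2,ℂ)` induced from the matrix topology. -/
noncomputable instance : TopologicalSpace SL2C :=
  TopologicalSpace.induced (fun A => (A : Matrix (Fin 2) (Fin 2) ℂ)) inferInstance

/-!
Lift `x`, `y` to `X`, `Y ∈ SL(2,ℂ)` and put `C = Y⁻¹XY`. If `C` anticommuted with `X`,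
conjugation would negate `X`, so `tr X = 0`, `X² = -1` and `x² = 1`. Hence `C` commutes with the
non-scalar matrix `X`, so `C = a + bX`, and comparing traces and determinants gives
`(1 - b²)(tr² X - 4) = 0`; `b = 1` means `C = X`, i.e. `y` commutes with `x`. Suppose it does
not. A matrix commuting with `X` and `Y` is then scalar, so, `y` having infinite order, no power
`y^k` with `k > 0` commutes with `x`.

If `tr² X ≠ 4` then `b = -1` and `C = tr X - X = X⁻¹`, so `y²` commutes with `x`. Otherwise
`X = σ + N` with `σ = ±1`, `N² = 0`, `N ≠ 0` and `Y⁻¹NY = bN`. If `b^k = 1` then `y^k`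
commutes with `x`. If `b` is not a root of unity we may assume `|b| ≤ 1` (replace `Y` by `Y⁻¹`)
and choose `n_j → ∞` with `b^(n_j)` convergent. The conjugates `g_n = Y^(-n) X Y^n = σ + bⁿN`
give the elements `g_(n_(j+1)) g_(n_j)⁻¹ = 1 + σ(b^(n_(j+1)) - b^(n_j))N` of `⟨x, y⟩`, which
are nontrivial in `PSL(2,ℂ)` and tend to `1`, contradicting discreteness.
-/

open Matrix Filter Topology
open scoped MatrixGroups

theorem commute_sq_of_inv_mul_mul_eq_inv {G : Type*} [Group G] {x y : G}
    (h : y⁻¹ * x * y = x⁻¹) : Commute (y ^ 2) x :=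
  calc y ^ 2 * x = y ^ 2 * (y⁻¹ * x * y)⁻¹ := by rw [h, inv_inv]
    _ = y * x⁻¹ * y := by group
    _ = y * (y⁻¹ * x * y) * y := by rw [h]
    _ = x * y ^ 2 := by simp only [mul_assoc, mul_inv_cancel_left, sq]

theorem mul_pow_eq_smul_pow_mul {R A : Type*} [CommSemiring R] [Semiring A] [Algebra R A]
    {N Y : A} {b : R} (h : N * Y = b • (Y * N)) (n : ℕ) :
    N * Y ^ n = b ^ n • (Y ^ n * N) := by
  induction n with
  | zero => simp
  | succ n ih =>
    rw [pow_succ, ← mul_assoc, ih, smul_mul_assoc, mul_assoc, h, mul_smul_comm, smul_smul,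
      ← mul_assoc, ← pow_succ, pow_succ]

theorem Subgroup.eventually_eq_one_of_tendsto_one {G ι : Type*} [Group G] [TopologicalSpace G]
    {H : Subgroup G} [DiscreteTopology H] {l : Filter ι} {u : ι → G} (hu : ∀ i, u i ∈ H)
    (h : Tendsto u l (𝓝 1)) : ∀ᶠ i in l, u i = 1 := by
  have hH : Tendsto (fun i => (⟨u i, hu i⟩ : H)) l (𝓝 1) := tendsto_subtype_rng.2 h
  rw [nhds_discrete, tendsto_pure] at hH
  exact hH.mono fun i hi => congrArg Subtype.val hi

namespace Matrix

section FinTwo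

variable {R K : Type*} [CommRing R] [Field K]

theorem mul_self_eq_trace_smul_sub_det_smul (A : Matrix (Fin 2) (Fin 2) R) :
    A * A = A.trace • A - A.det • (1 : Matrix (Fin 2) (Fin 2) R) := by
  ext i j
  fin_cases i <;> fin_cases j <;>
    simp only [mul_apply, Fin.sum_univ_two, trace_fin_two, det_fin_two, sub_apply, smul_apply,
      smul_eq_mul, one_apply_eq, one_apply_ne, ne_eq, zero_ne_one, one_ne_zero, not_false_eq_true,
      mul_one, mul_zero, sub_zero, Fin.isValue, Fin.zero_eta, Fin.mk_one, Nat.reduceAdd] <;>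
    ring

theorem det_smul_one_add_smul (a b : R) (A : Matrix (Fin 2) (Fin 2) R) :
    (a • (1 : Matrix (Fin 2) (Fin 2) R) + b • A).det
      = a ^ 2 + a * b * A.trace + b ^ 2 * A.det := by
  simp only [det_fin_two, trace_fin_two, add_apply, smul_apply, one_apply_eq, one_apply_ne,
    smul_eq_mul, mul_one, mul_zero, zero_add, ne_eq, zero_ne_one, one_ne_zero, not_false_eq_true,
    Fin.isValue]
  ring

theorem exists_eq_smul_one_add_smul_of_commute {A B : Matrix (Fin 2) (Fin 2) K}
    (hA : ∀ c : K, A ≠ c • 1) (h : Commute A B) : ∃ a b : K, B = a • 1 + b • A := by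
  have h00 := congrFun (congrFun h.eq 0) 0
  have h01 := congrFun (congrFun h.eq 0) 1
  have h10 := congrFun (congrFun h.eq 1) 0
  simp only [mul_apply, Fin.sum_univ_two] at h00 h01 h10
  set u : Fin 3 → K := ![A 0 1, A 1 0, A 0 0 - A 1 1]
  have hu : u ≠ 0 := by
    intro hu
    have hu0 := congrFun hu 0
    have hu1 := congrFun hu 1
    have hu2 := congrFun hu 2
    simp only [u, Fin.isValue, cons_val, Pi.zero_apply] at hu0 hu1 hu2
    refine hA (A 1 1) (ext fun i j => ?_)
    fin_cases i <;> fin_cases j <;> simp [hu0, hu1, sub_eq_zero.mp hu2]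
  -- `AB = BA` says exactly that `u` and the corresponding vector of `B` are parallel
  have hcross : crossProduct u ![B 0 1, B 1 0, B 0 0 - B 1 1] = 0 := by
    ext i
    fin_cases i <;>
      simp only [u, cross_apply, cons_val_zero, cons_val_one, cons_val, Pi.zero_apply, Fin.isValue,
        Fin.zero_eta, Fin.mk_one, Fin.reduceFinMk, Nat.succ_eq_add_one, Nat.reduceAdd]
    · linear_combination h10
    · linear_combination h01
    · linear_combination h00
  rw [← not_ne_iff, crossProduct_ne_zero_iff_linearIndependent,
    LinearIndependent.pair_iff' hu] at hcross
  simp only [not_forall, not_not] at hcross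
  obtain ⟨b, hb⟩ := hcross
  have hb0 := congrFun hb 0
  have hb1 := congrFun hb 1
  have hb2 := congrFun hb 2
  simp only [u, Pi.smul_apply, cons_val_zero, cons_val_one, cons_val, smul_eq_mul, Fin.isValue]
    at hb0 hb1 hb2
  refine ⟨B 0 0 - b * A 0 0, b, ext fun i j => ?_⟩
  fin_cases i <;> fin_cases j <;>
    simp only [add_apply, smul_apply, one_apply_eq, one_apply_ne, ne_eq, zero_ne_one, one_ne_zero,
      not_false_eq_true, smul_eq_mul, mul_one, mul_zero, zero_add, sub_add_cancel, Fin.isValue,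
      Fin.zero_eta, Fin.mk_one, Nat.reduceAdd]
  · linear_combination -hb0
  · linear_combination -hb1
  · linear_combination hb2

theorem exists_eq_smul_one_of_commute_of_not_commute {A W Y : Matrix (Fin 2) (Fin 2) K}
    (hA : ∀ c : K, A ≠ c • 1) (hAY : ¬ Commute A Y) (hWA : Commute W A) (hWY : Commute W Y) :
    ∃ c : K, W = c • 1 := by
  obtain ⟨c, d, rfl⟩ := exists_eq_smul_one_add_smul_of_commute hA hWA.symm
  refine ⟨c, ?_⟩
  have hd : d • (A * Y - Y * A) = 0 := by
    have := hWY.eq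
    simp only [add_mul, mul_add, smul_mul_assoc, mul_smul_comm, one_mul, mul_one] at this
    rw [smul_sub, sub_eq_zero]
    exact add_left_cancel this
  rcases smul_eq_zero.1 hd with rfl | h
  · rw [zero_smul, add_zero]
  · exact absurd (sub_eq_zero.1 h) hAY

end FinTwo

namespace SpecialLinearGroup

section General

variable {n R : Type*} [Fintype n] [DecidableEq n] [CommRing R]

local notation:1024 "↑ₘ" A:1024 => ((A : SpecialLinearGroup n R) : Matrix n n R)

theorem mem_center_of_coe_eq_smul_one {A : SpecialLinearGroup n R} {c : R} (h : ↑ₘA = c • 1) :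
    A ∈ Subgroup.center (SpecialLinearGroup n R) := by
  refine mem_center_iff.2 ⟨c, ?_, by rw [h, scalar_apply, smul_one_eq_diagonal]⟩
  simpa [h] using A.prop

theorem coe_inv_eq_of_mul_eq_one {A : SpecialLinearGroup n R} {M : Matrix n n R}
    (h : ↑ₘA * M = 1) : ↑ₘA⁻¹ = M := by
  rw [← mul_one ↑ₘA⁻¹, ← h, ← mul_assoc, ← coe_mul, inv_mul_cancel, coe_one, one_mul]

theorem coe_inv_mul_mul_eq_of_mul_eq {A X : SpecialLinearGroup n R} {M : Matrix n n R}
    (h : ↑ₘX * ↑ₘA = ↑ₘA * M) : ↑ₘ(A⁻¹ * X * A) = M := by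
  simp only [coe_mul]
  rw [mul_assoc, h, ← mul_assoc, ← coe_mul, inv_mul_cancel, coe_one, one_mul]

theorem trace_coe_inv_mul_mul (A X : SpecialLinearGroup n R) :
    (↑ₘ(A⁻¹ * X * A)).trace = (↑ₘX).trace := by
  rw [coe_mul, coe_mul, trace_mul_cycle, ← coe_mul, mul_inv_cancel, coe_one, one_mul]

theorem mul_coe_inv_eq_smul {Y : SpecialLinearGroup n R} {b c : R} {N : Matrix n n R}
    (hbc : c * b = 1) (hNY : N * ↑ₘY = b • (↑ₘY * N)) :
    N * ↑ₘY⁻¹ = c • (↑ₘY⁻¹ * N) := by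
  have hYY' : ↑ₘY * ↑ₘY⁻¹ = 1 := by rw [← coe_mul, mul_inv_cancel, coe_one]
  have hY'Y : ↑ₘY⁻¹ * ↑ₘY = 1 := by rw [← coe_mul, inv_mul_cancel, coe_one]
  have h : ↑ₘY⁻¹ * N = b • (N * ↑ₘY⁻¹) :=
    calc ↑ₘY⁻¹ * N = ↑ₘY⁻¹ * (N * ↑ₘY) * ↑ₘY⁻¹ := by
          simp only [mul_assoc, hYY', mul_one]
      _ = b • (N * ↑ₘY⁻¹) := by
        simp only [hNY, mul_smul_comm, smul_mul_assoc, ← mul_assoc, hY'Y, one_mul]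
  rw [h, smul_smul, hbc, one_smul]

variable {X Y : SpecialLinearGroup n R} {σ b : R} {N : Matrix n n R}

theorem coe_conj_pow (hXN : ↑ₘX = σ • 1 + N) (hNY : N * ↑ₘY = b • (↑ₘY * N))
    (k : ℕ) : ↑ₘ((Y ^ k)⁻¹ * X * Y ^ k) = σ • 1 + b ^ k • N := by
  refine coe_inv_mul_mul_eq_of_mul_eq ?_
  rw [hXN, coe_pow, add_mul, mul_add, mul_pow_eq_smul_pow_mul hNY, smul_mul_assoc, mul_smul_comm,
    mul_smul_comm, one_mul, mul_one]

theorem coe_conj_pow_mul_inv_conj_pow (hσ : σ ^ 2 = 1) (hXN : ↑ₘX = σ • 1 + N)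
    (hN2 : N * N = 0) (hNY : N * ↑ₘY = b • (↑ₘY * N)) (p q : ℕ) :
    ↑ₘ((Y ^ p)⁻¹ * X * Y ^ p * ((Y ^ q)⁻¹ * X * Y ^ q)⁻¹) =
      1 + (σ * (b ^ p - b ^ q)) • N := by
  have hinv : ↑ₘ((Y ^ q)⁻¹ * X * Y ^ q)⁻¹ = σ • 1 - b ^ q • N := by
    refine coe_inv_eq_of_mul_eq_one ?_
    rw [coe_conj_pow hXN hNY q]
    simp only [add_mul, mul_sub, smul_mul_smul, one_mul, mul_one, hN2, smul_zero]
    linear_combination (norm := module) hσ • (1 : Matrix n n R)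
  rw [coe_mul, coe_conj_pow hXN hNY p, hinv]
  simp only [add_mul, mul_sub, smul_mul_smul, one_mul, mul_one, hN2, smul_zero]
  linear_combination (norm := module) hσ • (1 : Matrix n n R)

theorem commute_pow_of_pow_eq_one (hXN : ↑ₘX = σ • 1 + N)
    (hNY : N * ↑ₘY = b • (↑ₘY * N)) {k : ℕ} (hbk : b ^ k = 1) : Commute (Y ^ k) X := by
  refine Commute.of_map coeMonoidHom_injective
    (?_ : ↑ₘ(Y ^ k) * ↑ₘX = ↑ₘX * ↑ₘ(Y ^ k))
  rw [coe_pow, hXN, mul_add, add_mul, mul_pow_eq_smul_pow_mul hNY, hbk, one_smul, mul_smul_comm,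
    smul_mul_assoc, mul_one, one_mul]

end General

section CommRing

variable {R : Type*} [CommRing R]

local notation:1024 "↑ₘ" A:1024 => ((A : SL(2, R)) : Matrix (Fin 2) (Fin 2) R)

theorem coe_inv_eq_trace_smul_one_sub (A : SL(2, R)) :
    ↑ₘA⁻¹ = (↑ₘA).trace • 1 - ↑ₘA := by
  rw [coe_inv, adjugate_fin_two]
  ext i j
  fin_cases i <;> fin_cases j <;> simp [trace_fin_two]

variable [IsDomain R]

theorem coe_eq_one_or_eq_neg_one_of_mem_center {A : SL(2, R)}
    (h : A ∈ Subgroup.center SL(2, R)) : ↑ₘA = 1 ∨ ↑ₘA = -1 := by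
  obtain ⟨r, hr, hA⟩ := mem_center_iff.1 h
  rw [Fintype.card_fin, sq_eq_one_iff] at hr
  rcases hr with rfl | rfl
  · left; rw [← hA]; simp
  · right; rw [← hA]; ext i j; fin_cases i <;> fin_cases j <;> simp

theorem coe_eq_or_eq_neg_of_mk_eq {A B : SL(2, R)} (h : (A : PSL(2, R)) = B) :
    ↑ₘB = ↑ₘA ∨ ↑ₘB = -↑ₘA := by
  have hB : ↑ₘB = ↑ₘA * ↑ₘ(A⁻¹ * B) := by rw [← coe_mul, mul_inv_cancel_left]
  rcases coe_eq_one_or_eq_neg_one_of_mem_center (QuotientGroup.eq.1 h) with h1 | h1 <;>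
    simp [hB, h1]

end CommRing

section Field

variable {K : Type*} [Field K]

local notation:1024 "↑ₘ" A:1024 => ((A : SL(2, K)) : Matrix (Fin 2) (Fin 2) K)

theorem mk_pow_eq_one_of_commute_pow {X Y : SL(2, K)} (hX : ∀ c : K, ↑ₘX ≠ c • 1)
    (hXY : ¬ Commute X Y) {k : ℕ} (h : Commute (Y ^ k) X) : (Y : PSL(2, K)) ^ k = 1 := by
  obtain ⟨c, hc⟩ := exists_eq_smul_one_of_commute_of_not_commute hX
    (fun h' => hXY (h'.of_map coeMonoidHom_injective)) (h.map coeMonoidHom)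
    (((Commute.refl Y).pow_left k).map coeMonoidHom)
  rw [← QuotientGroup.mk_pow, QuotientGroup.eq_one_iff]
  exact mem_center_of_coe_eq_smul_one hc

theorem exists_coe_conj_eq_smul_one_add_smul {X Y : SL(2, K)} (hX : ∀ c : K, ↑ₘX ≠ c • 1)
    (hC : Commute ↑ₘ(Y⁻¹ * X * Y) ↑ₘX) :
    ∃ a b : K, ↑ₘ(Y⁻¹ * X * Y) = a • 1 + b • ↑ₘX ∧
      2 * a + b * (↑ₘX).trace = (↑ₘX).trace ∧ a ^ 2 + a * b * (↑ₘX).trace + b ^ 2 = 1 := by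
  obtain ⟨a, b, hab⟩ := exists_eq_smul_one_add_smul_of_commute hX hC.symm
  refine ⟨a, b, hab, ?_, ?_⟩
  · have htr := congrArg trace hab
    rw [trace_coe_inv_mul_mul] at htr
    simp only [trace_add, trace_smul, trace_one, Fintype.card_fin, smul_eq_mul] at htr
    linear_combination -htr
  · simpa [hab, det_smul_one_add_smul, X.prop] using (Y⁻¹ * X * Y).prop

variable [NeZero (2 : K)]

theorem mk_ne_one_of_coe_eq_one_add_smul {A : SL(2, K)} {c : K} {N : Matrix (Fin 2) (Fin 2) K}
    (hN : N ≠ 0) (hN2 : N * N = 0) (hc : c ≠ 0) (hA : ↑ₘA = 1 + c • N) :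
    (A : PSL(2, K)) ≠ 1 := by
  rw [Ne, QuotientGroup.eq_one_iff]
  intro hcenter
  rcases coe_eq_one_or_eq_neg_one_of_mem_center hcenter with h | h <;> rw [hA] at h
  · exact hN ((smul_eq_zero.1 (add_eq_left.1 h)).resolve_left hc)
  · -- `c • N` would be the scalar `-2`, whose square `4` is not the square `0` of `c • N`
    have hcN : c • N = (-2 : K) • (1 : Matrix (Fin 2) (Fin 2) K) := by
      linear_combination (norm := module) h
    have hsq := congrArg (fun M => M * M) hcN
    simp only [smul_mul_smul, hN2, smul_zero, mul_one] at hsq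
    have h2 : (-2 : K) ≠ 0 := neg_ne_zero.2 two_ne_zero
    exact smul_ne_zero (mul_ne_zero h2 h2) one_ne_zero hsq.symm

theorem commute_coe_or_mk_sq_eq_one_of_commute_mk {A B : SL(2, K)}
    (h : Commute (A : PSL(2, K)) B) : Commute ↑ₘA ↑ₘB ∨ (B : PSL(2, K)) ^ 2 = 1 := by
  have hmk : ((A * B : SL(2, K)) : PSL(2, K)) = (B * A : SL(2, K)) := by
    simpa only [QuotientGroup.mk_mul] using h.eq
  rcases coe_eq_or_eq_neg_of_mk_eq hmk with hBA | hBA <;> rw [coe_mul, coe_mul] at hBA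
  · exact .inl hBA.symm
  right
  -- conjugation by `A` negates `B`, so the trace of `B` vanishes and `B ^ 2 = -1`
  have htr : (↑ₘB).trace = 0 := by
    have hconj := congrArg trace <| coe_inv_mul_mul_eq_of_mul_eq (X := B) (A := A) (M := -↑ₘB)
      (by rw [hBA, mul_neg])
    rw [trace_coe_inv_mul_mul, trace_neg] at hconj
    exact (mul_eq_zero.1 (by linear_combination hconj : (2 : K) * _ = 0)).resolve_left two_ne_zero
  rw [← QuotientGroup.mk_pow, QuotientGroup.eq_one_iff]
  refine mem_center_of_coe_eq_smul_one (c := -1) ?_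
  rw [coe_pow, sq, mul_self_eq_trace_smul_sub_det_smul, htr, B.prop]
  simp

theorem exists_eq_smul_one_add_of_trace_sq_eq_four {X : SL(2, K)}
    (hX : ∀ c : K, ↑ₘX ≠ c • 1) (ht : (↑ₘX).trace ^ 2 = 4) :
    ∃ (σ : K) (N : Matrix (Fin 2) (Fin 2) K), (↑ₘX).trace = 2 * σ ∧ σ ^ 2 = 1 ∧
      ↑ₘX = σ • 1 + N ∧ N ≠ 0 ∧ N * N = 0 := by
  obtain ⟨σ, hσt⟩ : ∃ σ : K, (↑ₘX).trace = 2 * σ :=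
    ⟨_, (mul_div_cancel₀ _ two_ne_zero).symm⟩
  rw [hσt] at ht
  have hσ : σ ^ 2 = 1 := mul_left_cancel₀ (pow_ne_zero 2 two_ne_zero) (by linear_combination ht)
  refine ⟨σ, ↑ₘX - σ • 1, hσt, hσ, by abel, fun hN => hX σ (sub_eq_zero.1 hN), ?_⟩
  have hXX := mul_self_eq_trace_smul_sub_det_smul ↑ₘX
  rw [hσt, X.prop] at hXX
  simp only [sub_mul, mul_sub, smul_mul_assoc, mul_smul_comm, one_mul, mul_one, hXX]
  linear_combination (norm := module) hσ • (1 : Matrix (Fin 2) (Fin 2) K)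

theorem inv_mul_mul_eq_inv_or_exists_nilpotent {X Y : SL(2, K)}
    (hX : ∀ c : K, ↑ₘX ≠ c • 1) (hXY : ¬ Commute X Y) (hC : Commute ↑ₘ(Y⁻¹ * X * Y) ↑ₘX) :
    Y⁻¹ * X * Y = X⁻¹ ∨ ∃ (σ b : K) (N : Matrix (Fin 2) (Fin 2) K), σ ^ 2 = 1 ∧
      ↑ₘX = σ • 1 + N ∧ N ≠ 0 ∧ N * N = 0 ∧ N * ↑ₘY = b • (↑ₘY * N) ∧ b ≠ 0 := by
  obtain ⟨a, b, hab, htr, hdet⟩ := exists_coe_conj_eq_smul_one_add_smul hX hC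
  have hYC : ↑ₘY * (a • 1 + b • ↑ₘX) = ↑ₘX * ↑ₘY := by
    rw [← hab, ← coe_mul, ← coe_mul, ← mul_assoc, ← mul_assoc, mul_inv_cancel, one_mul]
  have hb1 : b ≠ 1 := by
    rintro rfl
    obtain rfl : a = 0 := mul_left_cancel₀ two_ne_zero (by linear_combination htr)
    have : ↑ₘX * ↑ₘY = ↑ₘY * ↑ₘX := by simpa using hYC.symm
    exact hXY (Commute.of_map coeMonoidHom_injective this)
  by_cases ht : (↑ₘX).trace ^ 2 = 4
  · right
    obtain ⟨σ, N, hσt, hσ, hXN, hN, hN2⟩ := exists_eq_smul_one_add_of_trace_sq_eq_four hX ht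
    rw [hσt] at htr
    obtain rfl : a = σ - b * σ := mul_left_cancel₀ two_ne_zero (by linear_combination htr)
    have hNY : N * ↑ₘY = b • (↑ₘY * N) := by
      rw [hXN] at hYC
      simp only [mul_add, add_mul, mul_smul_comm, smul_mul_assoc, mul_one, one_mul] at hYC
      linear_combination (norm := module) -hYC
    refine ⟨σ, b, N, hσ, hXN, hN, hN2, hNY, ?_⟩
    rintro rfl
    refine hN ?_
    calc N = N * ↑ₘY * ↑ₘY⁻¹ := by
          rw [mul_assoc, ← coe_mul, mul_inv_cancel, coe_one, mul_one]
      _ = 0 := by rw [hNY, zero_smul, zero_mul]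
  · left
    obtain rfl : b = -1 := by
      have : (1 - b ^ 2) * ((↑ₘX).trace ^ 2 - 4) = 0 := by
        linear_combination 4 * hdet - (2 * a + (↑ₘX).trace * (1 + b)) * htr
      have hb2 : b ^ 2 = 1 := by
        linear_combination -(mul_eq_zero.1 this).resolve_right (sub_ne_zero.2 ht)
      exact (sq_eq_one_iff.1 hb2).resolve_left hb1
    obtain rfl : a = (↑ₘX).trace := mul_left_cancel₀ two_ne_zero (by linear_combination htr)
    refine Subtype.ext ?_
    rw [hab, coe_inv_eq_trace_smul_one_sub]
    module

end Field

end SpecialLinearGroup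

end Matrix

open SpecialLinearGroup

theorem tendsto_mk_of_tendsto_coe {ι : Type*} {l : Filter ι} {u : ι → SL2C} {A : SL2C}
    (h : Tendsto (fun i => (u i : Matrix (Fin 2) (Fin 2) ℂ)) l (𝓝 A)) :
    Tendsto (fun i => (u i : PSL2C)) l (𝓝 (A : PSL2C)) :=
  (QuotientGroup.continuous_mk.tendsto A).comp
    ((Topology.IsInducing.induced _).tendsto_nhds_iff.2 h)

theorem not_discreteTopology_of_conj_nilpotent_of_norm_le_one {H : Subgroup PSL2C} {X Y : SL2C}
    (hXH : (X : PSL2C) ∈ H) (hYH : (Y : PSL2C) ∈ H) {σ b : ℂ} {N : Matrix (Fin 2) (Fin 2) ℂ}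
    (hσ : σ ^ 2 = 1) (hXN : (X : Matrix (Fin 2) (Fin 2) ℂ) = σ • 1 + N) (hN : N ≠ 0)
    (hN2 : N * N = 0) (hNY : N * Y = b • ((Y : Matrix (Fin 2) (Fin 2) ℂ) * N)) (hb0 : b ≠ 0)
    (hb : ‖b‖ ≤ 1) (hroot : ∀ k, 0 < k → b ^ k ≠ 1) : ¬ DiscreteTopology H := by
  intro hdisc
  obtain ⟨β, -, φ, hφ, hlim⟩ := (isCompact_closedBall (0 : ℂ) 1).tendsto_subseq
    (x := fun k => b ^ k) fun k => by simpa using pow_le_one₀ (norm_nonneg b) hb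
  set w : ℕ → SL2C := fun j =>
    (Y ^ φ (j + 1))⁻¹ * X * Y ^ φ (j + 1) * ((Y ^ φ j)⁻¹ * X * Y ^ φ j)⁻¹
  set c : ℕ → ℂ := fun j => σ * (b ^ φ (j + 1) - b ^ φ j)
  have hw : ∀ j, (w j : Matrix (Fin 2) (Fin 2) ℂ) = 1 + c j • N := fun j =>
    coe_conj_pow_mul_inv_conj_pow hσ hXN hN2 hNY _ _
  have hwH : ∀ j, (w j : PSL2C) ∈ H := fun j => by
    have hconj : ∀ k, ((Y ^ k)⁻¹ * X * Y ^ k : SL2C) ∈ H.comap (QuotientGroup.mk' _) :=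
      fun k => mul_mem (mul_mem (inv_mem (pow_mem hYH k)) hXH) (pow_mem hYH k)
    exact mul_mem (hconj _) (inv_mem (hconj _))
  have hc : ∀ j, c j ≠ 0 := by
    intro j hcj
    have hlt := hφ j.lt_succ_self
    refine hroot _ (Nat.sub_pos_of_lt hlt) ?_
    rw [pow_sub₀ b hb0 hlt.le, mul_inv_eq_one₀ (pow_ne_zero _ hb0)]
    linear_combination (mul_eq_zero.1 hcj).resolve_left (by rintro rfl; simp at hσ)
  have hc0 : Tendsto c atTop (𝓝 0) := by
    simpa using ((hlim.comp (tendsto_add_atTop_nat 1)).sub hlim).const_mul σ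
  have hw1 : Tendsto (fun j => (w j : PSL2C)) atTop (𝓝 1) := by
    simpa using tendsto_mk_of_tendsto_coe (A := 1) (u := w)
      (by simpa [hw] using (hc0.smul_const N).const_add (1 : Matrix (Fin 2) (Fin 2) ℂ))
  obtain ⟨j, hj⟩ := (Subgroup.eventually_eq_one_of_tendsto_one hwH hw1).exists
  exact mk_ne_one_of_coe_eq_one_add_smul hN hN2 (hc j) (hw j) hj

theorem not_discreteTopology_of_conj_nilpotent {H : Subgroup PSL2C} {X Y : SL2C}
    (hXH : (X : PSL2C) ∈ H) (hYH : (Y : PSL2C) ∈ H) {σ b : ℂ} {N : Matrix (Fin 2) (Fin 2) ℂ}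
    (hσ : σ ^ 2 = 1) (hXN : (X : Matrix (Fin 2) (Fin 2) ℂ) = σ • 1 + N) (hN : N ≠ 0)
    (hN2 : N * N = 0) (hNY : N * Y = b • ((Y : Matrix (Fin 2) (Fin 2) ℂ) * N)) (hb0 : b ≠ 0)
    (hroot : ∀ k, 0 < k → b ^ k ≠ 1) : ¬ DiscreteTopology H := by
  rcases le_or_gt ‖b‖ 1 with hb | hb
  · exact not_discreteTopology_of_conj_nilpotent_of_norm_le_one hXH hYH hσ hXN hN hN2 hNY hb0 hb
      hroot
  · exact not_discreteTopology_of_conj_nilpotent_of_norm_le_one hXH (inv_mem hYH) hσ hXN hN hN2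
      (mul_coe_inv_eq_smul (inv_mul_cancel₀ hb0) hNY) (inv_ne_zero hb0)
      (by simpa using inv_le_one_of_one_le₀ hb.le) fun k hk h => hroot k hk (by simpa using h)

/-- Commutation Transitive, part (ii): if `x`, `y` are elements of `PSL(2,ℂ)` of
infinite order such that `y⁻¹ x y` commutes with `x`, and the subgroup generated by
`x` and `y` is discrete, then `y` commutes with `x`. -/
theorem commutation_transitive_ii (x y : PSL2C)
    (hx : ¬ IsOfFinOrder x) (hy : ¬ IsOfFinOrder y)
    (hcomm : Commute (y⁻¹ * x * y) x)
    (hdisc : DiscreteTopology (Subgroup.closure ({x, y} : Set PSL2C))) :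
    Commute y x := by
  obtain ⟨X, rfl⟩ := QuotientGroup.mk_surjective x
  obtain ⟨Y, rfl⟩ := QuotientGroup.mk_surjective y
  by_contra hYX
  have hXY : ¬ Commute X Y := fun h => hYX (h.symm.map (QuotientGroup.mk' _))
  have hX : ∀ c : ℂ, (X : Matrix (Fin 2) (Fin 2) ℂ) ≠ c • 1 := fun c h => hx <| by
    rw [(QuotientGroup.eq_one_iff X).2 (mem_center_of_coe_eq_smul_one h)]
    exact IsOfFinOrder.one
  have hYk : ∀ k, 0 < k → ¬ Commute (Y ^ k) X := fun k hk h =>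
    hy (isOfFinOrder_iff_pow_eq_one.2 ⟨k, hk, mk_pow_eq_one_of_commute_pow hX hXY h⟩)
  have hC := (commute_coe_or_mk_sq_eq_one_of_commute_mk (A := Y⁻¹ * X * Y) (B := X)
    (by simpa only [QuotientGroup.mk_mul, QuotientGroup.mk_inv] using hcomm)).resolve_right
    fun h => hx (isOfFinOrder_iff_pow_eq_one.2 ⟨2, two_pos, h⟩)
  obtain h | ⟨σ, b, N, hσ, hXN, hN, hN2, hNY, hb0⟩ :=
    inv_mul_mul_eq_inv_or_exists_nilpotent hX hXY hC
  · exact hYk 2 two_pos (commute_sq_of_inv_mul_mul_eq_inv h)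
  by_cases hroot : ∃ k, 0 < k ∧ b ^ k = 1
  · obtain ⟨k, hk, hbk⟩ := hroot
    exact hYk k hk (commute_pow_of_pow_eq_one hXN hNY hbk)
  push Not at hroot
  exact not_discreteTopology_of_conj_nilpotent (Subgroup.subset_closure (by simp))
    (Subgroup.subset_closure (by simp)) hσ hXN hN hN2 hNY hb0 hroot hdisc
end

section
/- Let G be a discrete torsion-free subgroup of PSL(2,ℂ) such that every element of G is represented by an upper-triangular matrix in SL(2,ℂ) (i.e., a matrix whose lower-left entry is 0; equivalently, every element of G fixes the point ∞ of the sphere at infinity). Then G is abelian. -/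
/-!
Conjugating the translation `z ↦ z + t` by an upper triangular matrix with diagonal `(a, a⁻¹)`
gives `z ↦ z + a² t`, and the commutator of two upper triangular matrices is a translation.
Suppose the commutator `t` of two elements of `G` is nonzero, and let `a` be the top left entry
of one of them. Discreteness forces `|a²| = 1`, since otherwise `a^{±2n} t → 0`. Powers of a
unimodular number return arbitrarily close to `1`, so the translations by `(a^{2n} - 1) t`
accumulate at the identity; hence `a²` is a root of unity, and if `a² ≠ 1` the element has
finite order. So `a² = 1` for both elements, which makes them translations up to sign, and they
commute after all.
-/

open Filter Topology Matrix.SpecialLinearGroup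
open scoped commutatorElement

lemma Complex.mapClusterPt_one_atTop_pow_of_norm_eq_one {z : ℂ} (hz : ‖z‖ = 1) :
    MapClusterPt 1 atTop (z ^ · : ℕ → ℂ) := by
  let w : Circle := ⟨z, mem_sphere_zero_iff_norm.2 hz⟩
  exact (mapClusterPt_one_atTop_pow w).continuousAt_comp
    (continuous_subtype_val.continuousAt (x := (1 : Circle)))

lemma MapClusterPt.frequently_eq_of_discreteTopology {X ι : Type*} [TopologicalSpace X]
    {S : Set X} [DiscreteTopology S] {l : Filter ι} {x : ι → X} {a : X} (ha : a ∈ S)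
    (hx : ∀ i, x i ∈ S) (h : MapClusterPt a l x) : ∃ᶠ i in l, x i = a := by
  have : {a} ∈ 𝓝[S] a := by
    simpa using mem_nhds_subtype_iff_nhdsWithin.1
      (mem_nhds_discrete.2 (Set.mem_singleton (⟨a, ha⟩ : S)))
  obtain ⟨U, hU, haU, hUS⟩ := mem_nhdsWithin.1 this
  exact (mapClusterPt_iff_frequently.1 h U (hU.mem_nhds haU)).mono
    fun i hi => hUS ⟨hi, hx i⟩

namespace SL2C

def translation (c : ℂ) : SL2C := ⟨!![1, c; 0, 1], by simp [Matrix.det_fin_two_of]⟩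

lemma translation_add (c d : ℂ) : translation (c + d) = translation c * translation d := by
  ext i j
  rw [coe_mul]
  fin_cases i <;> fin_cases j <;> simp [translation, add_comm]

lemma translation_zero : translation 0 = 1 := by
  ext i j
  fin_cases i <;> fin_cases j <;> simp [translation]

lemma continuous_translation : Continuous translation := by
  refine continuous_induced_rng.2 (continuous_pi fun i => continuous_pi fun j => ?_)
  fin_cases i <;> fin_cases j <;> simp [translation] <;> fun_prop

lemma translation_mem_center_iff {c : ℂ} : translation c ∈ Subgroup.center SL2C ↔ c = 0 := by
  refine ⟨fun h => ?_, by rintro rfl; rw [translation_zero]; exact one_mem _⟩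
  have := congrFun₂ (scalar_eq_self_of_mem_center h 0) 0 1
  simpa [translation] using this.symm

lemma topLeft_sq_eq_one_of_mem_center {A : SL2C} (hA : A ∈ Subgroup.center SL2C) :
    A 0 0 ^ 2 = 1 := by
  have hdet := A.2
  rw [← scalar_eq_self_of_mem_center hA 0] at hdet
  simpa using hdet

def upperTriangular : Subgroup SL2C where
  carrier := {A | A 1 0 = 0}
  mul_mem' {A B} hA hB := by
    simp_all [coe_mul, Matrix.mul_apply, Fin.sum_univ_two]
  one_mem' := by simp
  inv_mem' {A} hA := by
    simp_all [coe_inv, Matrix.adjugate_fin_two]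

lemma mem_upperTriangular {A : SL2C} : A ∈ upperTriangular ↔ A 1 0 = 0 := Iff.rfl

variable {A : SL2C}

lemma eq_of_mem_upperTriangular (hA : A ∈ upperTriangular) :
    (A : Matrix (Fin 2) (Fin 2) ℂ) = !![A 0 0, A 0 1; 0, A 1 1] := by
  rw [← mem_upperTriangular.1 hA]
  exact (Matrix.etaExpand_eq _).symm

lemma topLeft_mul_bottomRight (hA : A ∈ upperTriangular) : A 0 0 * A 1 1 = 1 := by
  have h := A.2
  rwa [Matrix.det_fin_two, mem_upperTriangular.1 hA, mul_zero, sub_zero] at h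

def topLeft : upperTriangular →* ℂˣ where
  toFun A := ⟨A.1 0 0, A.1 1 1, topLeft_mul_bottomRight A.2,
    (mul_comm _ _).trans (topLeft_mul_bottomRight A.2)⟩
  map_one' := by ext; simp
  map_mul' A B := by
    ext
    simp [coe_mul, Matrix.mul_apply, Fin.sum_univ_two, mem_upperTriangular.1 B.2]

lemma topLeft_inv (hA : A ∈ upperTriangular) : A⁻¹ 0 0 = (A 0 0)⁻¹ := by
  have := congrArg Units.val (map_inv topLeft ⟨A, hA⟩)
  rwa [Units.val_inv_eq_inv_val] at this

lemma topLeft_pow (hA : A ∈ upperTriangular) (m : ℕ) : (A ^ m) 0 0 = A 0 0 ^ m := by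
  have := congrArg Units.val (map_pow topLeft ⟨A, hA⟩ m)
  rwa [Units.val_pow_eq_pow_val] at this

lemma topLeft_commutatorElement {B : SL2C} (hA : A ∈ upperTriangular)
    (hB : B ∈ upperTriangular) : (⁅A, B⁆ : SL2C) 0 0 = 1 := by
  have := congrArg Units.val (map_commutatorElement topLeft ⟨A, hA⟩ ⟨B, hB⟩)
  rwa [Commute.commutator_eq (Commute.all (topLeft ⟨A, hA⟩) _)] at this

lemma mul_translation (hA : A ∈ upperTriangular) (c : ℂ) :
    A * translation c = translation (A 0 0 ^ 2 * c) * A := by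
  have hdet := topLeft_mul_bottomRight hA
  ext i j
  rw [coe_mul, coe_mul, eq_of_mem_upperTriangular hA]
  fin_cases i <;> fin_cases j <;> simp [translation]
  linear_combination (-(A 0 0 * c)) * hdet

lemma conj_translation (hA : A ∈ upperTriangular) (c : ℂ) :
    A * translation c * A⁻¹ = translation (A 0 0 ^ 2 * c) :=
  mul_inv_eq_of_eq_mul (mul_translation hA c)

lemma mul_translation_mem_center (hA : A ∈ upperTriangular) (h : A 0 0 ^ 2 = 1) :
    A * translation (-(A 0 0 * A 0 1)) ∈ Subgroup.center SL2C := by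
  have hdet := topLeft_mul_bottomRight hA
  have hd : A 1 1 = A 0 0 := by linear_combination A 0 0 * hdet - A 1 1 * h
  refine mem_center_iff.2 ⟨A 0 0, by simpa [Fintype.card_fin] using h, ?_⟩
  ext i j
  rw [coe_mul, eq_of_mem_upperTriangular hA]
  fin_cases i <;> fin_cases j <;> simp [translation, hd]
  linear_combination A 0 1 * h

end SL2C

namespace PSL2C

open SL2C (upperTriangular)

def translation (c : ℂ) : PSL2C := SL2C.translation c

lemma translation_add (c d : ℂ) : translation (c + d) = translation c * translation d := by
  rw [translation, SL2C.translation_add, QuotientGroup.mk_mul]; rfl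

lemma translation_zero : translation 0 = 1 := by
  rw [translation, SL2C.translation_zero, QuotientGroup.mk_one]

lemma translation_sub (c d : ℂ) : translation (c - d) = translation c * (translation d)⁻¹ :=
  eq_mul_inv_of_mul_eq (by rw [← translation_add, sub_add_cancel])

lemma commute_translation (c d : ℂ) : Commute (translation c) (translation d) := by
  rw [Commute, SemiconjBy, ← translation_add, ← translation_add, add_comm]

lemma translation_eq_one_iff {c : ℂ} : translation c = 1 ↔ c = 0 :=
  (QuotientGroup.eq_one_iff _).trans SL2C.translation_mem_center_iff

lemma translation_injective : Function.Injective translation := fun c d h => by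
  rwa [← sub_eq_zero, ← translation_eq_one_iff, translation_sub, mul_inv_eq_one]

lemma continuous_translation : Continuous translation :=
  continuous_quotient_mk'.comp SL2C.continuous_translation

variable {A : SL2C}

lemma conj_translation (hA : A ∈ upperTriangular) (c : ℂ) :
    (A : PSL2C) * translation c * (A : PSL2C)⁻¹ = translation (A 0 0 ^ 2 * c) := by
  simp only [translation, ← SL2C.conj_translation hA, QuotientGroup.mk_mul,
    QuotientGroup.mk_inv]

lemma mk_eq_translation (hA : A ∈ upperTriangular) (h : A 0 0 ^ 2 = 1) :
    (A : PSL2C) = translation (A 0 0 * A 0 1) := by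
  set x := A 0 0 * A 0 1
  have hcenter : ((A * SL2C.translation (-x) : SL2C) : PSL2C) = 1 :=
    (QuotientGroup.eq_one_iff _).2 (SL2C.mul_translation_mem_center hA h)
  calc (A : PSL2C)
      = ((A * SL2C.translation (-x) * SL2C.translation x : SL2C) : PSL2C) := by
        rw [mul_assoc, ← SL2C.translation_add, neg_add_cancel, SL2C.translation_zero, mul_one]
    _ = translation x := by rw [QuotientGroup.mk_mul, hcenter, one_mul, translation]

lemma exists_commutatorElement_eq_translation {B : SL2C} (hA : A ∈ upperTriangular)
    (hB : B ∈ upperTriangular) : ∃ t, ⁅(A : PSL2C), (B : PSL2C)⁆ = translation t := by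
  have hC : ⁅A, B⁆ ∈ upperTriangular :=
    mul_mem (mul_mem (mul_mem hA hB) (inv_mem hA)) (inv_mem hB)
  exact ⟨_, (map_commutatorElement (QuotientGroup.mk' _) A B).symm.trans <|
    mk_eq_translation hC (by rw [SL2C.topLeft_commutatorElement hA hB, one_pow])⟩

lemma mk_pow_eq_one (hA : A ∈ upperTriangular) (hA2 : A 0 0 ^ 2 ≠ 1) {m : ℕ}
    (hm : (A 0 0 ^ 2) ^ m = 1) : (A : PSL2C) ^ m = 1 := by
  have hsq : (A ^ m) 0 0 ^ 2 = 1 := by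
    rw [SL2C.topLeft_pow hA, ← pow_mul, mul_comm, pow_mul, hm]
  set s := (A ^ m) 0 0 * (A ^ m) 0 1
  have hpow : (A : PSL2C) ^ m = translation s := by
    rw [← QuotientGroup.mk_pow]
    exact mk_eq_translation (pow_mem hA m) hsq
  have hfix : translation (A 0 0 ^ 2 * s) = translation s := by
    rw [← conj_translation hA, ← hpow]
    exact mul_inv_eq_of_eq_mul (Commute.self_pow _ m).eq
  have hs : s = 0 := by
    have := translation_injective hfix
    exact (mul_eq_zero.1 (by linear_combination this : (A 0 0 ^ 2 - 1) * s = 0)).resolve_left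
      (sub_ne_zero.2 hA2)
  rw [hpow, hs, translation_zero]

variable {G : Subgroup PSL2C} {t : ℂ}

lemma translation_pow_mul_mem (hA : A ∈ upperTriangular) (hAG : (A : PSL2C) ∈ G)
    (ht : translation t ∈ G) (n : ℕ) : translation ((A 0 0 ^ 2) ^ n * t) ∈ G := by
  induction n with
  | zero => simpa using ht
  | succ n ih =>
    rw [pow_succ', mul_assoc, ← conj_translation hA]
    exact G.mul_mem (G.mul_mem hAG ih) (G.inv_mem hAG)

section Discrete

variable [DiscreteTopology G]

lemma frequently_eq_zero_of_translation_mem {c : ℕ → ℂ} (hG : ∀ n, translation (c n) ∈ G)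
    (hc : MapClusterPt 0 atTop c) : ∃ᶠ n in atTop, c n = 0 := by
  have hlim := hc.continuousAt_comp continuous_translation.continuousAt
  rw [translation_zero] at hlim
  exact (hlim.frequently_eq_of_discreteTopology (S := G) G.one_mem hG).mono
    fun n hn => translation_eq_one_iff.1 hn

lemma one_le_norm_topLeft_sq (hA : A ∈ upperTriangular) (hAG : (A : PSL2C) ∈ G) (ht0 : t ≠ 0)
    (ht : translation t ∈ G) : 1 ≤ ‖A 0 0 ^ 2‖ := by
  by_contra! hlt
  have hlim : Tendsto (fun n => (A 0 0 ^ 2) ^ n * t) atTop (𝓝 0) := by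
    simpa using (tendsto_pow_atTop_nhds_zero_of_norm_lt_one hlt).mul_const t
  obtain ⟨n, hn⟩ := (frequently_eq_zero_of_translation_mem (translation_pow_mul_mem hA hAG ht)
    hlim.mapClusterPt).exists
  have ha : A 0 0 ≠ 0 := left_ne_zero_of_mul_eq_one (SL2C.topLeft_mul_bottomRight hA)
  simp [ha, ht0] at hn

lemma norm_topLeft_sq_eq_one (hA : A ∈ upperTriangular) (hAG : (A : PSL2C) ∈ G) (ht0 : t ≠ 0)
    (ht : translation t ∈ G) : ‖A 0 0 ^ 2‖ = 1 := by
  have hinv := one_le_norm_topLeft_sq (inv_mem hA) (by rwa [QuotientGroup.mk_inv, inv_mem_iff])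
    ht0 ht
  rw [SL2C.topLeft_inv hA, inv_pow, norm_inv, one_le_inv_iff₀] at hinv
  exact le_antisymm hinv.2 (one_le_norm_topLeft_sq hA hAG ht0 ht)

lemma topLeft_sq_eq_one (htf : ∀ g ∈ G, g ≠ 1 → ¬IsOfFinOrder g)
    (hA : A ∈ upperTriangular) (hAG : (A : PSL2C) ∈ G) (ht0 : t ≠ 0)
    (ht : translation t ∈ G) : A 0 0 ^ 2 = 1 := by
  by_contra hA2
  set l := A 0 0 ^ 2
  have hmem (n : ℕ) : translation ((l ^ n - 1) * t) ∈ G := by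
    rw [sub_mul, one_mul, translation_sub]
    exact G.mul_mem (translation_pow_mul_mem hA hAG ht n) (G.inv_mem ht)
  have hclust : MapClusterPt 0 atTop fun n => (l ^ n - 1) * t := by
    simpa [Function.comp_def, l] using (Complex.mapClusterPt_one_atTop_pow_of_norm_eq_one
      (norm_topLeft_sq_eq_one hA hAG ht0 ht)).continuousAt_comp
      (f := fun w => (w - 1) * t) (by fun_prop)
  obtain ⟨m, hlm, hm⟩ :=
    ((frequently_eq_zero_of_translation_mem hmem hclust).and_eventually
      (eventually_ge_atTop 1)).exists
  have hpow := mk_pow_eq_one hA hA2 (by simpa [sub_eq_zero, ht0] using hlm)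
  have hA1 : (A : PSL2C) = 1 := by
    by_contra h
    exact htf _ hAG h (isOfFinOrder_iff_pow_eq_one.2 ⟨m, hm, hpow⟩)
  exact hA2 (SL2C.topLeft_sq_eq_one_of_mem_center ((QuotientGroup.eq_one_iff _).1 hA1))

end Discrete

end PSL2C

open PSL2C in
/-- A discrete torsion-free subgroup of `PSL(2,ℂ)`, all of whose elements are
represented by upper-triangular matrices in `SL(2,ℂ)` (i.e. the group fixes the point
`∞` of the sphere at infinity), is abelian. -/
theorem discrete_torsionFree_upperTriangular_abelian (G : Subgroup PSL2C)
    (hdisc : DiscreteTopology G)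
    (htf : ∀ g ∈ G, g ≠ 1 → ¬ IsOfFinOrder g)
    (htri : ∀ g ∈ G, ∃ A : SL2C,
      (QuotientGroup.mk A : PSL2C) = g ∧ (A : Matrix (Fin 2) (Fin 2) ℂ) 1 0 = 0) :
    ∀ a ∈ G, ∀ b ∈ G, a * b = b * a := by
  intro a ha b hb
  obtain ⟨A, rfl, hA⟩ := htri a ha
  obtain ⟨B, rfl, hB⟩ := htri b hb
  by_cases hsq : A 0 0 ^ 2 = 1 ∧ B 0 0 ^ 2 = 1
  · rw [mk_eq_translation hA hsq.1, mk_eq_translation hB hsq.2]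
    exact commute_translation _ _
  obtain ⟨t, ht⟩ := exists_commutatorElement_eq_translation hA hB
  rw [← commutatorElement_eq_one_iff_mul_comm, ht, translation_eq_one_iff]
  by_contra ht0
  have htG : translation t ∈ G :=
    ht ▸ G.mul_mem (G.mul_mem (G.mul_mem ha hb) (G.inv_mem ha)) (G.inv_mem hb)
  exact hsq ⟨topLeft_sq_eq_one htf hA ha ht0 htG, topLeft_sq_eq_one htf hB hb ht0 htG⟩
end

section
/- Let a, b, c ∈ ℂ with |a| ≠ 1 and c ≠ 0, and consider the matrices A = [[a, b], [0, a⁻¹]] and P = [[1, c], [0, 1]] in SL(2,ℂ). Then the subgroup of SL(2,ℂ) generated by {A, P} is not a discrete subgroup of SL(2,ℂ). -/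
/-!
Conjugating `P = [[1, c], [0, 1]]` by an upper triangular `B = [[z, w], [0, z⁻¹]]` gives
`[[1, z² c], [0, 1]]`. Replacing `A` by `A⁻¹` if necessary, the group contains such a `B` with
`|z| < 1`, so the elements `Bⁿ P B⁻ⁿ = [[1, z²ⁿ c], [0, 1]]` tend to the identity without ever
reaching it, which is impossible in a discrete subgroup.
-/

open Filter Topology Matrix Matrix.SpecialLinearGroup

theorem Filter.Tendsto.eventually_eq_of_discreteTopology {ι X : Type*} [TopologicalSpace X]
    {l : Filter ι} {p : X → Prop} [DiscreteTopology (Subtype p)] {u : ι → X} {x : X}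
    (h : Tendsto u l (𝓝 x)) (hu : ∀ i, p (u i)) (hx : p x) : ∀ᶠ i in l, u i = x := by
  have h' : Tendsto (fun i => (⟨u i, hu i⟩ : Subtype p)) l (𝓝 ⟨x, hx⟩) :=
    tendsto_subtype_rng.mpr h
  rw [nhds_discrete, tendsto_pure] at h'
  exact h'.mono fun i hi => congrArg Subtype.val hi

namespace Matrix.SpecialLinearGroup

variable {K : Type*} [Field K]

theorem ne_zero_of_coe_eq_upperTriangular {B : SpecialLinearGroup (Fin 2) K} {z w : K}
    (hB : (B : Matrix (Fin 2) (Fin 2) K) = !![z, w; 0, z⁻¹]) : z ≠ 0 := by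
  rintro rfl
  simpa [hB] using B.det_coe

theorem coe_inv_of_coe_eq_upperTriangular {B : SpecialLinearGroup (Fin 2) K} {z w : K}
    (hB : (B : Matrix (Fin 2) (Fin 2) K) = !![z, w; 0, z⁻¹]) :
    ((B⁻¹ : SpecialLinearGroup (Fin 2) K) : Matrix (Fin 2) (Fin 2) K)
      = !![z⁻¹, -w; 0, z⁻¹⁻¹] := by
  rw [coe_inv, hB, adjugate_fin_two_of, neg_zero, inv_inv]

theorem coe_conj_unipotent {B P : SpecialLinearGroup (Fin 2) K} {z w c : K}
    (hB : (B : Matrix (Fin 2) (Fin 2) K) = !![z, w; 0, z⁻¹])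
    (hP : (P : Matrix (Fin 2) (Fin 2) K) = !![1, c; 0, 1]) :
    ((B * P * B⁻¹ : SpecialLinearGroup (Fin 2) K) : Matrix (Fin 2) (Fin 2) K)
      = !![1, z ^ 2 * c; 0, 1] := by
  have hz := ne_zero_of_coe_eq_upperTriangular hB
  rw [coe_mul, coe_mul, coe_inv_of_coe_eq_upperTriangular hB, hB, hP, inv_inv]
  simp [hz]
  ring

theorem coe_pow_conj_unipotent {B P : SpecialLinearGroup (Fin 2) K} {z w c : K}
    (hB : (B : Matrix (Fin 2) (Fin 2) K) = !![z, w; 0, z⁻¹])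
    (hP : (P : Matrix (Fin 2) (Fin 2) K) = !![1, c; 0, 1]) (n : ℕ) :
    ((B ^ n * P * (B ^ n)⁻¹ : SpecialLinearGroup (Fin 2) K) : Matrix (Fin 2) (Fin 2) K)
      = !![1, (z ^ 2) ^ n * c; 0, 1] := by
  induction n with
  | zero => simpa using hP
  | succ n ih =>
    have hconj : B ^ (n + 1) * P * (B ^ (n + 1))⁻¹ = B * (B ^ n * P * (B ^ n)⁻¹) * B⁻¹ := by
      group
    rw [hconj, coe_conj_unipotent hB ih, pow_succ' (z ^ 2) n, mul_assoc]

end Matrix.SpecialLinearGroup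

theorem tendsto_one_of_coe_eq_unipotent {ι : Type*} {l : Filter ι} {u : ι → SL2C} {x : ι → ℂ}
    (hu : ∀ i, (u i : Matrix (Fin 2) (Fin 2) ℂ) = !![1, x i; 0, 1]) (hx : Tendsto x l (𝓝 0)) :
    Tendsto u l (𝓝 1) := by
  rw [(Topology.IsInducing.induced _).tendsto_nhds_iff]
  have hcont : Continuous fun x : ℂ => !![1, x; 0, 1] := by fun_prop
  simpa [Function.comp_def, hu, one_fin_two] using (hcont.tendsto 0).comp hx

/-- The subgroup of `SL(2,ℂ)` generated by a hyperbolic (loxodromic) element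
`A = [[a, b], [0, a⁻¹]]` with `|a| ≠ 1` and a nontrivial parabolic element
`P = [[1, c], [0, 1]]`, `c ≠ 0`, sharing the fixed point `∞` at infinity, is not
discrete. -/
theorem hyperbolic_parabolic_common_fixed_point_not_discrete
    (a b c : ℂ) (ha : ‖a‖ ≠ 1) (hc : c ≠ 0)
    (A P : SL2C)
    (hA : (A : Matrix (Fin 2) (Fin 2) ℂ) = !![a, b; 0, a⁻¹])
    (hP : (P : Matrix (Fin 2) (Fin 2) ℂ) = !![1, c; 0, 1]) :
    ¬ DiscreteTopology (Subgroup.closure ({A, P} : Set SL2C)) := by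
  intro hdiscrete
  set H := Subgroup.closure ({A, P} : Set SL2C)
  have hAH : A ∈ H := Subgroup.subset_closure (by simp)
  have hPH : P ∈ H := Subgroup.subset_closure (by simp)
  obtain ⟨B, hBH, z, w, hB, hz⟩ :
      ∃ B ∈ H, ∃ z w : ℂ, (B : Matrix (Fin 2) (Fin 2) ℂ) = !![z, w; 0, z⁻¹] ∧ ‖z‖ < 1 := by
    rcases ha.lt_or_gt with h | h
    · exact ⟨A, hAH, a, b, hA, h⟩
    · exact ⟨A⁻¹, inv_mem hAH, a⁻¹, -b, coe_inv_of_coe_eq_upperTriangular hA,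
        by rwa [norm_inv, inv_lt_one₀ (one_pos.trans h)]⟩
  have hconj := coe_pow_conj_unipotent hB hP
  have hlim : Tendsto (fun n : ℕ => (z ^ 2) ^ n * c) atTop (𝓝 0) := by
    simpa using (tendsto_pow_atTop_nhds_zero_of_norm_lt_one
      (by simpa using pow_lt_one₀ (norm_nonneg z) hz two_ne_zero)).mul_const c
  obtain ⟨n, hn⟩ := ((tendsto_one_of_coe_eq_unipotent hconj hlim).eventually_eq_of_discreteTopology
    (fun n => mul_mem (mul_mem (pow_mem hBH n) hPH) (inv_mem (pow_mem hBH n))) H.one_mem).exists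
  have h01 := congrArg (fun M : SL2C => (M : Matrix (Fin 2) (Fin 2) ℂ) 0 1) hn
  simp [hconj, ne_zero_of_coe_eq_upperTriangular hB, hc] at h01
end

section
/- For every point z₀ of the upper half-plane ℍ and every real number R ≥ 0, the set {g ∈ SL(2,ℝ) : dist(g • z₀, z₀) ≤ R} is a compact subset of SL(2,ℝ), where dist denotes the hyperbolic distance on ℍ. -/
open UpperHalfPlane

/-- The topology on `SL(2,ℝ)` induced from the matrix topology. -/
instance : TopologicalSpace (Matrix.SpecialLinearGroup (Fin 2) ℝ) :=
  TopologicalSpace.induced (fun A => (A : Matrix (Fin 2) (Fin 2) ℝ)) inferInstance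

theorem ProperSMul.isCompact_setOf_smul_mem {G X : Type*} [Group G] [MulAction G X]
    [TopologicalSpace G] [TopologicalSpace X] [ProperSMul G X] (x : X) {K : Set X}
    (hK : IsCompact K) : IsCompact {g : G | g • x ∈ K} := by
  simpa using ProperSMul.isCompact_setOfPred_inter_nonempty (G := G) isCompact_singleton hK

theorem isCompact_boundedDisplacement_general (z₀ : UpperHalfPlane) (R : ℝ) :
    IsCompact {g : Matrix.SpecialLinearGroup (Fin 2) ℝ | dist (g • z₀) z₀ ≤ R} :=
  -- The induced topology above is Mathlib's subtype topology on `SL(2, ℝ)` only up to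
  -- unfolding, so instance search does not find `instProperSMul` by itself.
  have : ProperSMul (Matrix.SpecialLinearGroup (Fin 2) ℝ) ℍ := instProperSMul
  ProperSMul.isCompact_setOf_smul_mem z₀ (isCompact_closedBall z₀ R)

/-- The set of isometries of the hyperbolic plane which move a given point `z₀` by a
bounded amount `R` is compact: for `z₀ ∈ ℍ` and `R ≥ 0`, the set
`{g ∈ SL(2,ℝ) : dist(g • z₀, z₀) ≤ R}` is compact, where `dist` is the hyperbolic
distance on the upper half-plane. -/
theorem isCompact_boundedDisplacement (z₀ : UpperHalfPlane) (R : ℝ) (hR : 0 ≤ R) :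
    IsCompact {g : Matrix.SpecialLinearGroup (Fin 2) ℝ | dist (g • z₀) z₀ ≤ R} :=
  isCompact_boundedDisplacement_general z₀ R
end

section
/- Let A and B be abelian subgroups of PSL(2,ℂ) such that every non-identity element of A and every non-identity element of B has infinite order, and suppose that A ∩ B contains a non-identity element. Then the subgroup of PSL(2,ℂ) generated by A ∪ B is abelian. -/
/-!
For a 2×2 matrix `M` put `offScalar M = (M₀₁, M₁₀, M₀₀ - M₁₁)`. The equations `MN = NM` say
exactly that `offScalar M ⨯₃ offScalar N = 0`, i.e. that these vectors are parallel; since being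
parallel to a fixed nonzero vector is transitive, the centralizer of a nonscalar matrix is
commutative. Commuting elements of `PSL(2, K)` lift to matrices that commute up to a sign, and the
sign `-1` forces the lift `X` of the fixed element to be traceless, so `X² = -1` by Cayley–Hamilton
and its image has order at most 2. An element `x ≠ 1` of `A ∩ B` has infinite order, so
`A` and `B`, and hence the subgroup they generate, lie in the abelian centralizer of `x`.
-/

open scoped Matrix MatrixGroups

theorem cross_eq_zero_of_cross_eq_zero_of_ne_zero {F : Type*} [Field F]
    {u v w : Fin 3 → F} (hw : w ≠ 0) (hu : u ⨯₃ w = 0) (hv : v ⨯₃ w = 0) : u ⨯₃ v = 0 := by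
  have parallel {y : Fin 3 → F} (hy : y ⨯₃ w = 0) : ∃ a : F, a • w = y := by
    rw [← neg_eq_zero, cross_anticomm] at hy
    simpa [LinearIndependent.pair_iff' hw] using
      mt crossProduct_ne_zero_iff_linearIndependent.mpr (not_not.mpr hy)
  obtain ⟨a, rfl⟩ := parallel hu
  obtain ⟨b, rfl⟩ := parallel hv
  simp [cross_self]

namespace Matrix

section CommRing

variable {R : Type*} [CommRing R]

def offScalar (M : Matrix (Fin 2) (Fin 2) R) : Fin 3 → R := ![M 0 1, M 1 0, M 0 0 - M 1 1]

theorem offScalar_eq_zero_iff {M : Matrix (Fin 2) (Fin 2) R} :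
    offScalar M = 0 ↔ M ∈ Set.range (scalar (Fin 2)) := by
  constructor
  · intro h
    simp only [offScalar, cons_eq_zero_iff, sub_eq_zero] at h
    refine ⟨M 1 1, ?_⟩
    ext i j
    fin_cases i <;> fin_cases j <;> simp [h]
  · rintro ⟨r, rfl⟩
    ext i
    fin_cases i <;> simp [offScalar]

theorem commute_iff_cross_offScalar_eq_zero {M N : Matrix (Fin 2) (Fin 2) R} :
    Commute M N ↔ offScalar M ⨯₃ offScalar N = 0 := by
  simp only [commute_iff_eq, ← Matrix.ext_iff, Fin.forall_fin_two, mul_apply, Fin.sum_univ_two,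
    cross_apply, offScalar, cons_val, cons_eq_zero_iff, zero_empty, and_true, sub_eq_zero]
  constructor
  · rintro ⟨⟨h00, h01⟩, h10, -⟩
    exact ⟨by linear_combination h10, by linear_combination h01, by linear_combination h00⟩
  · rintro ⟨c0, c1, c2⟩
    exact ⟨⟨by linear_combination c2, by linear_combination c1⟩, by linear_combination c0,
      by linear_combination -c2⟩

end CommRing

variable {K : Type*} [Field K]

theorem commute_of_commute_of_notMem_range_scalar {M N X : Matrix (Fin 2) (Fin 2) K}
    (hX : X ∉ Set.range (scalar (Fin 2))) (hM : Commute M X) (hN : Commute N X) :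
    Commute M N := by
  rw [← offScalar_eq_zero_iff] at hX
  rw [commute_iff_cross_offScalar_eq_zero] at hM hN ⊢
  exact cross_eq_zero_of_cross_eq_zero_of_ne_zero hX hM hN

theorem sq_eq_neg_one_of_mul_eq_neg_mul [NeZero (2 : K)] {A X : Matrix (Fin 2) (Fin 2) K}
    (hA : IsUnit A.det) (hX : X.det = 1) (h : X * A = -(A * X)) : X ^ 2 = -1 := by
  have hconj : A⁻¹ * X * A = -X := by
    rw [mul_assoc, h, mul_neg, nonsing_inv_mul_cancel_left _ _ hA]
  have htr : X.trace = 0 := by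
    have : X.trace = -X.trace := by
      rw [← trace_neg, ← hconj, trace_mul_comm, mul_nonsing_inv_cancel_left _ _ hA]
    exact (mul_eq_zero.mp (by linear_combination this : (2 : K) * X.trace = 0)).resolve_left
      two_ne_zero
  have hCH := aeval_self_charpoly X
  rw [charpoly_fin_two, htr, hX] at hCH
  simpa [add_eq_zero_iff_eq_neg] using hCH

namespace SpecialLinearGroup

theorem mem_center_iff_fin_two {R : Type*} [CommRing R] [NoZeroDivisors R] {A : SL(2, R)} :
    A ∈ Subgroup.center SL(2, R) ↔
      (A : Matrix (Fin 2) (Fin 2) R) = 1 ∨ (A : Matrix (Fin 2) (Fin 2) R) = -1 := by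
  rw [mem_center_iff, Fintype.card_fin]
  constructor
  · rintro ⟨r, hr, hA⟩
    rw [← hA]
    rcases mul_self_eq_one_iff.mp ((sq r).symm.trans hr) with rfl | rfl <;>
      simp only [map_one, map_neg, true_or, or_true]
  · rintro (h | h)
    · exact ⟨1, one_pow 2, by rw [h, map_one]⟩
    · exact ⟨-1, by norm_num, by rw [h, map_neg, map_one]⟩

theorem notMem_range_scalar_of_mk_ne_one {X : SL(2, K)}
    (hX : (X : SL(2, K) ⧸ Subgroup.center SL(2, K)) ≠ 1) :
    (X : Matrix (Fin 2) (Fin 2) K) ∉ Set.range (scalar (Fin 2)) := by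
  rintro ⟨r, hr⟩
  refine hX ((QuotientGroup.eq_one_iff X).mpr (mem_center_iff.mpr ⟨r, ?_, hr⟩))
  simpa [← hr, det_diagonal] using X.det_coe

theorem commute_coe_of_commute_mk [NeZero (2 : K)] {A X : SL(2, K)}
    (hX : (X : SL(2, K) ⧸ Subgroup.center SL(2, K)) ^ 2 ≠ 1)
    (h : Commute (A : SL(2, K) ⧸ Subgroup.center SL(2, K)) X) :
    Commute (A : Matrix (Fin 2) (Fin 2) K) X := by
  have hz : (A * X)⁻¹ * (X * A) ∈ Subgroup.center SL(2, K) := by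
    rw [← QuotientGroup.eq, QuotientGroup.mk_mul, QuotientGroup.mk_mul]
    exact h.eq
  rcases mem_center_iff_fin_two.mp hz with hone | hneg
  · have hAX : Commute A X := inv_mul_eq_one.mp (Subtype.ext (hone.trans coe_one.symm))
    exact hAX.map coeMonoidHom
  · have hXA : (X : Matrix (Fin 2) (Fin 2) K) * A = -(A * X) := by
      have := congrArg Subtype.val (mul_inv_cancel_left (A * X) (X * A))
      rw [coe_mul, hneg, mul_neg_one, coe_mul, coe_mul] at this
      exact this.symm
    have hXsq := sq_eq_neg_one_of_mul_eq_neg_mul (by rw [A.det_coe]; exact isUnit_one)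
      X.det_coe hXA
    refine absurd ?_ hX
    rw [← QuotientGroup.mk_pow, QuotientGroup.eq_one_iff, mem_center_iff_fin_two, coe_pow, hXsq]
    exact Or.inr rfl

theorem quotientCenter_commute_of_commute_of_sq_ne_one [NeZero (2 : K)]
    {a b x : SL(2, K) ⧸ Subgroup.center SL(2, K)}
    (hx : x ^ 2 ≠ 1) (ha : Commute a x) (hb : Commute b x) : Commute a b := by
  obtain ⟨X, rfl⟩ := QuotientGroup.mk_surjective x
  obtain ⟨A, rfl⟩ := QuotientGroup.mk_surjective a
  obtain ⟨B, rfl⟩ := QuotientGroup.mk_surjective b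
  have hX := notMem_range_scalar_of_mk_ne_one (X := X) fun h ↦ hx (by rw [h, one_pow])
  have hAB : Commute A B := Subtype.ext <| commute_of_commute_of_notMem_range_scalar hX
    (commute_coe_of_commute_mk hx ha) (commute_coe_of_commute_mk hx hb)
  exact hAB.map (QuotientGroup.mk' _)

end SpecialLinearGroup

end Matrix

theorem abelian_amalgam_abelian_general (A B : Subgroup PSL2C)
    (hAcomm : ∀ a ∈ A, ∀ b ∈ A, a * b = b * a)
    (hBcomm : ∀ a ∈ B, ∀ b ∈ B, a * b = b * a)
    (hAtf : ∀ a ∈ A, a ≠ 1 → ¬ IsOfFinOrder a)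
    (hmeet : ∃ x : PSL2C, x ∈ A ⊓ B ∧ x ≠ 1) :
    ∀ a ∈ Subgroup.closure ((A : Set PSL2C) ∪ (B : Set PSL2C)),
      ∀ b ∈ Subgroup.closure ((A : Set PSL2C) ∪ (B : Set PSL2C)), a * b = b * a := by
  obtain ⟨x, ⟨hxA, hxB⟩, hx1⟩ := hmeet
  have hx : x ^ 2 ≠ 1 := fun h ↦ hAtf x hxA hx1 (isOfFinOrder_iff_pow_eq_one.mpr ⟨2, two_pos, h⟩)
  have hle : Subgroup.closure ((A : Set PSL2C) ∪ B) ≤ Subgroup.centralizer {x} := by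
    rw [Subgroup.closure_le]
    rintro g (hg | hg) <;> rw [SetLike.mem_coe, Subgroup.mem_centralizer_singleton_iff]
    exacts [hAcomm g hg x hxA, hBcomm g hg x hxB]
  intro a ha b hb
  exact Matrix.SpecialLinearGroup.quotientCenter_commute_of_commute_of_sq_ne_one hx
    (Subgroup.mem_centralizer_singleton_iff.mp (hle ha))
    (Subgroup.mem_centralizer_singleton_iff.mp (hle hb))

/-- If `A` and `B` are abelian subgroups of `PSL(2,ℂ)` whose non-identity elements all
have infinite order, and `A ∩ B` contains a non-identity element, then the subgroup
generated by `A ∪ B` is abelian. -/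
theorem abelian_amalgam_abelian (A B : Subgroup PSL2C)
    (hAcomm : ∀ a ∈ A, ∀ b ∈ A, a * b = b * a)
    (hBcomm : ∀ a ∈ B, ∀ b ∈ B, a * b = b * a)
    (hAtf : ∀ a ∈ A, a ≠ 1 → ¬ IsOfFinOrder a)
    (hBtf : ∀ b ∈ B, b ≠ 1 → ¬ IsOfFinOrder b)
    (hmeet : ∃ x : PSL2C, x ∈ A ⊓ B ∧ x ≠ 1) :
    ∀ a ∈ Subgroup.closure ((A : Set PSL2C) ∪ (B : Set PSL2C)),
      ∀ b ∈ Subgroup.closure ((A : Set PSL2C) ∪ (B : Set PSL2C)), a * b = b * a :=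
  abelian_amalgam_abelian_general A B hAcomm hBcomm hAtf hmeet
end
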